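/- arXiv:2601.08180 — 4 statements merged into one kernel-verified Lean document; each statement's English description precedes it below -/
import Mathlib

section
/- For all complex-valued Schwartz functions f and g on ℝ^{2N} and every coordinate index 1 ≤ j ≤ 2N, the Leibniz rule ∂_j(f × g) = (∂_j f) × g + f × (∂_j g) holds pointwise on ℝ^{2N}, where ∂_j denotes the partial derivative in the j-th coordinate direction. -/
open MeasureTheory SchwartzMap Complex

noncomputable section

abbrev PS (N : ℕ) := EuclideanSpace ℝ (Fin N ⊕ Fin N)

def symp {N : ℕ} (u v : PS N) : ℝ :=
  ∑ i : Fin N, (u (Sum.inl i) * v (Sum.inr i) - u (Sum.inr i) * v (Sum.inl i))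

def mes (N : ℕ) : Measure (PS N) :=
  (ENNReal.ofReal ((2 * Real.pi) ^ N))⁻¹ • (volume : Measure (PS N))

def twProd {N : ℕ} (f g : PS N → ℂ) : PS N → ℂ := fun u =>
  ∫ s, ∫ t, f (u + s) * g (u + t) * Complex.exp (Complex.I * (symp s t : ℂ)) ∂(mes N) ∂(mes N)

/-- Partial derivative in the `j`-th coordinate direction. -/
def pdj {N : ℕ} (j : Fin N ⊕ Fin N) (f : PS N → ℂ) : PS N → ℂ := fun u =>
  fderiv ℝ f u (EuclideanSpace.single j (1 : ℝ))

/-! Differentiate under the integral sign. Peetre's inequality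
`1 + ‖s‖ ≤ (1 + ‖x‖) * (1 + ‖x + s‖)` bounds a shifted Schwartz function `φ (x + s)`, uniformly
for `x` near `u`, by `C * (1 + ‖s‖) ^ (-k)`, which is integrable for `k` large. As the phase has
modulus one, this dominates both the integrand `f (x + s) * g (x + t) * e^{iσ(s,t)}` and its
`x`-derivative, which the product rule computes. -/

open LineDeriv

namespace SchwartzMap

variable {D E : Type*} [NormedAddCommGroup D] [NormedSpace ℝ D]
  [NormedAddCommGroup E] [NormedSpace ℝ E]

theorem norm_comp_add_le (φ : 𝓢(D, E)) (k : ℕ) :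
    ∃ C, 0 ≤ C ∧ ∀ x s : D, ‖φ (x + s)‖ ≤ C * (1 + ‖x‖) ^ k * (1 + ‖s‖) ^ (-(k : ℝ)) := by
  set C := 2 ^ k * (Finset.Iic (k, 0)).sup (fun m => SchwartzMap.seminorm ℝ m.1 m.2) φ
  refine ⟨C, by positivity, fun x s => ?_⟩
  have hdecay : (1 + ‖x + s‖) ^ k * ‖φ (x + s)‖ ≤ C := by
    simpa using one_add_le_sup_seminorm_apply (𝕜 := ℝ) (m := (k, 0)) le_rfl le_rfl φ (x + s)
  have hpeetre : 1 + ‖s‖ ≤ (1 + ‖x‖) * (1 + ‖x + s‖) := by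
    have := norm_sub_le (x + s) x
    rw [add_sub_cancel_left] at this
    nlinarith [norm_nonneg x, norm_nonneg (x + s)]
  rw [Real.rpow_neg (by positivity), Real.rpow_natCast, ← div_eq_mul_inv,
    le_div_iff₀ (by positivity)]
  calc ‖φ (x + s)‖ * (1 + ‖s‖) ^ k
      ≤ ‖φ (x + s)‖ * ((1 + ‖x‖) * (1 + ‖x + s‖)) ^ k := by gcongr
    _ = (1 + ‖x‖) ^ k * ((1 + ‖x + s‖) ^ k * ‖φ (x + s)‖) := by rw [mul_pow]; ring
    _ ≤ (1 + ‖x‖) ^ k * C := by gcongr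
    _ = C * (1 + ‖x‖) ^ k := mul_comm _ _

theorem exists_integrable_bound_comp_add [MeasurableSpace D] (μ : Measure D)
    [μ.HasTemperateGrowth] (φ : 𝓢(D, E)) (u : D) :
    ∃ b : D → ℝ, Integrable b μ ∧ ∀ x ∈ Metric.ball u 1, ∀ s, ‖φ (x + s)‖ ≤ b s := by
  obtain ⟨C, hC0, hC⟩ := φ.norm_comp_add_le μ.integrablePower
  refine ⟨fun s => C * (2 + ‖u‖) ^ μ.integrablePower * (1 + ‖s‖) ^ (-(μ.integrablePower : ℝ)),
    (Measure.integrable_pow_neg_integrablePower μ).const_mul _, fun x hx s => (hC x s).trans ?_⟩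
  have hxu : 1 + ‖x‖ ≤ 2 + ‖u‖ := by
    have := norm_le_norm_add_norm_sub' x u
    rw [Metric.mem_ball, dist_eq_norm] at hx
    linarith
  dsimp only
  gcongr

end SchwartzMap

section KernelIntegral

variable {D : Type*} [NormedAddCommGroup D] [NormedSpace ℝ D] {K : D × D → ℂ}

def kernelIntegrand (K : D × D → ℂ) (φ ψ : D → ℂ) (x : D) (p : D × D) : ℂ :=
  φ (x + p.1) * ψ (x + p.2) * K p

def fderivKernelIntegrand (K : D × D → ℂ) (φ ψ : D → ℂ) (x : D) (p : D × D) : D →L[ℝ] ℂ :=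
  K p • (φ (x + p.1) • fderiv ℝ ψ (x + p.2) + ψ (x + p.2) • fderiv ℝ φ (x + p.1))

theorem hasFDerivAt_kernelIntegrand (φ ψ : 𝓢(D, ℂ)) (x : D) (p : D × D) :
    HasFDerivAt (kernelIntegrand K φ ψ · p) (fderivKernelIntegrand K φ ψ x p) x :=
  (((hasFDerivAt_comp_add_right p.1).2 (φ.hasFDerivAt _)).mul
    ((hasFDerivAt_comp_add_right p.2).2 (ψ.hasFDerivAt _))).mul_const (K p)

theorem norm_fderivKernelIntegrand_le (hK : ∀ p, ‖K p‖ ≤ 1) (φ ψ : D → ℂ)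
    (x : D) (p : D × D) :
    ‖fderivKernelIntegrand K φ ψ x p‖ ≤
      ‖φ (x + p.1)‖ * ‖fderiv ℝ ψ (x + p.2)‖ + ‖fderiv ℝ φ (x + p.1)‖ * ‖ψ (x + p.2)‖ := by
  rw [fderivKernelIntegrand, norm_smul]
  grw [hK p, one_mul, norm_add_le, norm_smul, norm_smul, mul_comm ‖fderiv ℝ φ _‖]

variable [MeasurableSpace D] {μ : Measure D} [μ.HasTemperateGrowth]

theorem exists_integrable_bound_norm_comp_add_mul_norm_comp_add {E F : Type*}
    [NormedAddCommGroup E] [NormedSpace ℝ E] [NormedAddCommGroup F] [NormedSpace ℝ F]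
    (φ : 𝓢(D, E)) (ψ : 𝓢(D, F)) (u : D) :
    ∃ b : D × D → ℝ, Integrable b (μ.prod μ) ∧
      ∀ x ∈ Metric.ball u 1, ∀ p : D × D, ‖φ (x + p.1)‖ * ‖ψ (x + p.2)‖ ≤ b p := by
  obtain ⟨bφ, hbφ, hφ⟩ := φ.exists_integrable_bound_comp_add μ u
  obtain ⟨bψ, hbψ, hψ⟩ := ψ.exists_integrable_bound_comp_add μ u
  exact ⟨fun p => bφ p.1 * bψ p.2, hbφ.mul_prod hbψ, fun x hx p =>
    mul_le_mul (hφ x hx p.1) (hψ x hx p.2) (norm_nonneg _) ((norm_nonneg _).trans (hφ x hx p.1))⟩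

theorem exists_integrable_bound_fderivKernelIntegrand (hK : ∀ p, ‖K p‖ ≤ 1) (φ ψ : 𝓢(D, ℂ))
    (u : D) :
    ∃ b : D × D → ℝ, Integrable b (μ.prod μ) ∧
      ∀ x ∈ Metric.ball u 1, ∀ p : D × D, ‖fderivKernelIntegrand K φ ψ x p‖ ≤ b p := by
  obtain ⟨b₁, hb₁, hbound₁⟩ :=
    exists_integrable_bound_norm_comp_add_mul_norm_comp_add (μ := μ) φ (fderivCLM ℝ D ℂ ψ) u
  obtain ⟨b₂, hb₂, hbound₂⟩ :=
    exists_integrable_bound_norm_comp_add_mul_norm_comp_add (μ := μ) (fderivCLM ℝ D ℂ φ) ψ u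
  exact ⟨b₁ + b₂, hb₁.add hb₂, fun x hx p => (norm_fderivKernelIntegrand_le hK φ ψ x p).trans
    (add_le_add (hbound₁ x hx p) (hbound₂ x hx p))⟩

variable [BorelSpace D] [SecondCountableTopology D]

theorem integrable_kernelIntegrand (hKm : AEStronglyMeasurable K (μ.prod μ))
    (hK : ∀ p, ‖K p‖ ≤ 1) (φ ψ : 𝓢(D, ℂ)) (x : D) :
    Integrable (kernelIntegrand K φ ψ x) (μ.prod μ) := by
  obtain ⟨b, hb, hbound⟩ :=
    exists_integrable_bound_norm_comp_add_mul_norm_comp_add (μ := μ) φ ψ x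
  refine hb.mono' ?_ (.of_forall fun p => ?_)
  · exact (by fun_prop : Continuous fun p : D × D => φ (x + p.1) * ψ (x + p.2))
      |>.aestronglyMeasurable.mul hKm
  · rw [kernelIntegrand, norm_mul, norm_mul]
    grw [hK p, mul_one]
    exact hbound x (Metric.mem_ball_self one_pos) p

theorem integrable_fderivKernelIntegrand (hKm : AEStronglyMeasurable K (μ.prod μ))
    (hK : ∀ p, ‖K p‖ ≤ 1) (φ ψ : 𝓢(D, ℂ)) (x : D) :
    Integrable (fderivKernelIntegrand K φ ψ x) (μ.prod μ) := by
  obtain ⟨b, hb, hbound⟩ := exists_integrable_bound_fderivKernelIntegrand (μ := μ) hK φ ψ x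
  have hφ' : Continuous (fderiv ℝ φ) := (fderivCLM ℝ D ℂ φ).continuous
  have hψ' : Continuous (fderiv ℝ ψ) := (fderivCLM ℝ D ℂ ψ).continuous
  have hcont : Continuous fun p : D × D =>
      φ (x + p.1) • fderiv ℝ ψ (x + p.2) + ψ (x + p.2) • fderiv ℝ φ (x + p.1) := by
    fun_prop
  exact hb.mono' (hKm.smul hcont.aestronglyMeasurable)
    (.of_forall (hbound x (Metric.mem_ball_self one_pos)))

theorem hasFDerivAt_integral_kernelIntegrand (hKm : AEStronglyMeasurable K (μ.prod μ))
    (hK : ∀ p, ‖K p‖ ≤ 1) (φ ψ : 𝓢(D, ℂ)) (u : D) :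
    HasFDerivAt (fun x => ∫ p, kernelIntegrand K φ ψ x p ∂μ.prod μ)
      (∫ p, fderivKernelIntegrand K φ ψ u p ∂μ.prod μ) u := by
  obtain ⟨b, hb, hbound⟩ := exists_integrable_bound_fderivKernelIntegrand (μ := μ) hK φ ψ u
  exact hasFDerivAt_integral_of_dominated_of_fderiv_le (Metric.ball_mem_nhds u one_pos)
    (.of_forall fun x => (integrable_kernelIntegrand hKm hK φ ψ x).aestronglyMeasurable)
    (integrable_kernelIntegrand hKm hK φ ψ u)
    (integrable_fderivKernelIntegrand hKm hK φ ψ u).aestronglyMeasurable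
    (.of_forall fun p x hx => hbound x hx p) hb
    (.of_forall fun p x _ => hasFDerivAt_kernelIntegrand φ ψ x p)

theorem fderiv_integral_kernelIntegrand_apply (hKm : AEStronglyMeasurable K (μ.prod μ))
    (hK : ∀ p, ‖K p‖ ≤ 1) (φ ψ : 𝓢(D, ℂ)) (u v : D) :
    fderiv ℝ (fun x => ∫ p, kernelIntegrand K φ ψ x p ∂μ.prod μ) u v =
      (∫ p, kernelIntegrand K ⇑(∂_{v} φ : 𝓢(D, ℂ)) ψ u p ∂μ.prod μ) +
        ∫ p, kernelIntegrand K φ ⇑(∂_{v} ψ : 𝓢(D, ℂ)) u p ∂μ.prod μ := by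
  rw [(hasFDerivAt_integral_kernelIntegrand hKm hK φ ψ u).fderiv,
    ContinuousLinearMap.integral_apply (integrable_fderivKernelIntegrand hKm hK φ ψ u),
    ← integral_add (integrable_kernelIntegrand hKm hK _ ψ u)
      (integrable_kernelIntegrand hKm hK φ _ u)]
  congr 1 with p
  simp only [fderivKernelIntegrand, kernelIntegrand, smul_apply,
    add_apply, smul_eq_mul, lineDerivOp_apply_eq_fderiv]
  ring

end KernelIntegral

instance (N : ℕ) : (mes N).IsAddHaarMeasure :=
  .smul _ (ENNReal.inv_ne_zero.2 ENNReal.ofReal_ne_top)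
    (ENNReal.inv_ne_top.2 (ENNReal.ofReal_pos.2 (by positivity)).ne')

def sympPhase {N : ℕ} (p : PS N × PS N) : ℂ :=
  Complex.exp (Complex.I * (symp p.1 p.2 : ℂ))

theorem continuous_sympPhase {N : ℕ} : Continuous (sympPhase (N := N)) := by
  unfold sympPhase symp
  fun_prop

theorem norm_sympPhase {N : ℕ} (p : PS N × PS N) : ‖sympPhase p‖ = 1 := by
  rw [sympPhase, mul_comm, Complex.norm_exp_ofReal_mul_I]

theorem twProd_eq_integral_kernelIntegrand {N : ℕ} (φ ψ : 𝓢(PS N, ℂ)) (x : PS N) :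
    twProd φ ψ x = ∫ p, kernelIntegrand sympPhase φ ψ x p ∂(mes N).prod (mes N) :=
  (integral_prod _ (integrable_kernelIntegrand continuous_sympPhase.aestronglyMeasurable
    (fun p => (norm_sympPhase p).le) φ ψ x)).symm

theorem pdj_eq_lineDerivOp {N : ℕ} (j : Fin N ⊕ Fin N) (φ : 𝓢(PS N, ℂ)) :
    pdj j φ = ⇑(∂_{EuclideanSpace.single j (1 : ℝ)} φ : 𝓢(PS N, ℂ)) :=
  rfl

theorem twProd_leibniz_general (N : ℕ)
    (f g : SchwartzMap (PS N) ℂ) (j : Fin N ⊕ Fin N) (u : PS N) :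
    pdj j (twProd (⇑f) (⇑g)) u
      = twProd (pdj j (⇑f)) (⇑g) u + twProd (⇑f) (pdj j (⇑g)) u := by
  rw [pdj, funext (twProd_eq_integral_kernelIntegrand f g),
    fderiv_integral_kernelIntegrand_apply continuous_sympPhase.aestronglyMeasurable
      (fun p => (norm_sympPhase p).le),
    pdj_eq_lineDerivOp, pdj_eq_lineDerivOp, twProd_eq_integral_kernelIntegrand,
    twProd_eq_integral_kernelIntegrand]

theorem twProd_leibniz (N : ℕ) (hN : 0 < N)
    (f g : SchwartzMap (PS N) ℂ) (j : Fin N ⊕ Fin N) (u : PS N) :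
    pdj j (twProd (⇑f) (⇑g)) u
      = twProd (pdj j (⇑f)) (⇑g) u + twProd (⇑f) (pdj j (⇑g)) u :=
  twProd_leibniz_general N f g j u
end
end

section
/- For all complex-valued Schwartz functions f and g on ℝ^{2N} and every coordinate index 1 ≤ j ≤ 2N, one has pointwise on ℝ^{2N}: u_j·(f × g)(u) = (f × (μ_j g))(u) + i·((∂̂_j f) × g)(u), and also u_j·(f × g)(u) = ((μ_j f) × g)(u) − i·(f × (∂̂_j g))(u). -/
open MeasureTheory SchwartzMap Complex

noncomputable section

/-- Multiplication by the `j`-th coordinate. -/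
def muj {N : ℕ} (j : Fin N ⊕ Fin N) (f : PS N → ℂ) : PS N → ℂ := fun u =>
  (u j : ℂ) * f u

/-- The "hat" derivative: `∂̂_j f = ∂_{j+N} f` for `1 ≤ j ≤ N`, `∂̂_j f = -∂_{j-N} f`
for `N < j ≤ 2N`. -/
def hatpdj {N : ℕ} (j : Fin N ⊕ Fin N) (f : PS N → ℂ) : PS N → ℂ :=
  match j with
  | Sum.inl i => pdj (Sum.inr i) f
  | Sum.inr i => fun u => -(pdj (Sum.inl i) f u)

/-
Writing `a = f (u + ·)` and `b = g (u + ·)`, the twisted product at `u` is the pairing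
`P(a, b) = ∬ a(s) b(t) e^{iσ(s,t)}`, and `u_j` splits off from `(u + t)_j b(t)` (resp.
`(u + s)_j a(s)`), leaving `P(a, t_j b)` (resp. `P(s_j a, b)`). The derivative `∂̂_j` is the
directional derivative along a vector `ĵ` with `σ(ĵ, t) = -t_j` and `σ(s, ĵ) = s_j`, so
integrating by parts against the phase turns `t_j e^{iσ(s,t)}` into `-i ∂̂_j` acting on `a`
and `s_j e^{iσ(s,t)}` into `i ∂̂_j` acting on `b`. With Fubini this gives
`P(a, t_j b) = -i P(∂̂_j a, b)` and `P(s_j a, b) = i P(a, ∂̂_j b)`.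
-/

theorem MeasureTheory.Integrable.mul_cexp_I_mul {α : Type*} [MeasurableSpace α] {μ : Measure α}
    {F : α → ℂ} (hF : Integrable F μ) {φ : α → ℝ} (hφ : Measurable φ) :
    Integrable (fun x => F x * exp (I * φ x)) μ :=
  hF.mul_bdd (by fun_prop) (ae_of_all _ fun x => (norm_exp_I_mul_ofReal (φ x)).le)

namespace SchwartzMap

open scoped LineDeriv

variable {E : Type*} [NormedAddCommGroup E] [NormedSpace ℝ E]

theorem coe_compSubConstCLM_neg {V : Type*} [NormedAddCommGroup V] [NormedSpace ℝ V]
    (F : 𝓢(E, V)) (u : E) : ⇑(F.compSubConstCLM ℝ (-u)) = fun s => F (u + s) := by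
  ext s
  simp [add_comm]

variable [FiniteDimensional ℝ E] [MeasurableSpace E] [BorelSpace E] {μ : Measure E}
  [μ.IsAddHaarMeasure]

theorem integral_fderiv_mul_cexp (F : 𝓢(E, ℂ)) (v : E) (L : E →L[ℝ] ℝ) :
    ∫ x, fderiv ℝ F x v * exp (I * L x) ∂μ
      = -(I * L v) * ∫ x, F x * exp (I * L x) ∂μ := by
  set L' : E →L[ℝ] ℂ := I • (ofRealCLM ∘L L)
  have hL' (x : E) : L' x = I * L x := rfl
  have hphase (x : E) : HasFDerivAt (fun y => exp (I * L y)) (exp (I * L x) • L') x := by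
    simpa only [hL'] using L'.hasFDerivAt.cexp
  have hF : Integrable F μ := F.integrable
  have hF' : Integrable ⇑(∂_{v} F : 𝓢(E, ℂ)) μ := (∂_{v} F).integrable
  have parts := integral_bilinear_hasFDerivAt_right_eq_neg_left_of_integrable
    (B := ContinuousLinearMap.mul ℝ ℂ) (v := v)
    (f := F) (f' := fderiv ℝ F)
    (g := fun y => exp (I * L y)) (g' := fun x => exp (I * L x) • L')
    (by simpa [lineDerivOp_apply_eq_fderiv] using hF'.mul_cexp_I_mul L.measurable)
    (by simpa [mul_assoc] using (hF.mul_cexp_I_mul L.measurable).mul_const (L' v))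
    (by simpa using hF.mul_cexp_I_mul L.measurable)
    (fun x _ => F.hasFDerivAt x) (fun x _ => hphase x)
  simp only [ContinuousLinearMap.mul_apply', FunLike.coe_smul, Pi.smul_apply,
    smul_eq_mul, hL'] at parts
  have hpull : ∫ x, F x * (exp (I * L x) * (I * L v)) ∂μ
      = I * L v * ∫ x, F x * exp (I * L x) ∂μ := by
    rw [← integral_const_mul]
    congr 1 with x
    ring
  rw [hpull] at parts
  linear_combination parts

end SchwartzMap

section Symplectic

variable {N : ℕ}

def sympCLM : PS N →L[ℝ] PS N →L[ℝ] ℝ :=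
  ∑ i : Fin N,
    ((ContinuousLinearMap.mul ℝ ℝ).bilinearComp (EuclideanSpace.proj (Sum.inl i))
        (EuclideanSpace.proj (Sum.inr i)) -
      (ContinuousLinearMap.mul ℝ ℝ).bilinearComp (EuclideanSpace.proj (Sum.inr i))
        (EuclideanSpace.proj (Sum.inl i)))

@[simp]
theorem sympCLM_apply (s t : PS N) : sympCLM s t = symp s t := by
  simp [sympCLM, symp]

theorem measurable_symp : Measurable fun p : PS N × PS N => symp p.1 p.2 := by
  unfold symp
  fun_prop

def hatVec : Fin N ⊕ Fin N → PS N
  | Sum.inl i => EuclideanSpace.single (Sum.inr i) 1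
  | Sum.inr i => -EuclideanSpace.single (Sum.inl i) 1

theorem hatpdj_apply (j : Fin N ⊕ Fin N) (F : PS N → ℂ) (x : PS N) :
    hatpdj j F x = fderiv ℝ F x (hatVec j) := by
  cases j <;> simp [hatpdj, pdj, hatVec]

theorem symp_hatVec_left (j : Fin N ⊕ Fin N) (t : PS N) : symp (hatVec j) t = -t j := by
  cases j <;> simp [symp, hatVec]

theorem symp_hatVec_right (j : Fin N ⊕ Fin N) (s : PS N) : symp s (hatVec j) = s j := by
  cases j <;> simp [symp, hatVec]

theorem hatpdj_comp_add_left (j : Fin N ⊕ Fin N) (F : PS N → ℂ) (u : PS N) :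
    hatpdj j (fun s => F (u + s)) = fun s => hatpdj j F (u + s) := by
  ext s
  simp only [hatpdj_apply, fderiv_comp_add_left]

theorem muj_comp_add_left (j : Fin N ⊕ Fin N) (F : PS N → ℂ) (u : PS N) :
    (fun s => muj j F (u + s))
      = (u j : ℂ) • (fun s => F (u + s)) + muj j (fun s => F (u + s)) := by
  ext s
  simp only [muj, PiLp.add_apply, Pi.add_apply, Pi.smul_apply, smul_eq_mul]
  push_cast
  ring

end Symplectic

section Schwartz

open scoped LineDeriv

variable {N : ℕ} {μ : Measure (PS N)}

theorem hatpdj_eq_lineDerivOp (j : Fin N ⊕ Fin N) (F : 𝓢(PS N, ℂ)) :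
    hatpdj j ⇑F = ⇑(∂_{hatVec j} F : 𝓢(PS N, ℂ)) := by
  ext x
  rw [hatpdj_apply, lineDerivOp_apply_eq_fderiv]

theorem integrable_hatpdj [μ.HasTemperateGrowth] (j : Fin N ⊕ Fin N) (F : 𝓢(PS N, ℂ)) :
    Integrable (hatpdj j ⇑F) μ := by
  rw [hatpdj_eq_lineDerivOp]
  exact SchwartzMap.integrable _

theorem integrable_muj [μ.HasTemperateGrowth] (j : Fin N ⊕ Fin N) (F : 𝓢(PS N, ℂ)) :
    Integrable (muj j ⇑F) μ := by
  have hcoord : (fun x : PS N => x j).HasTemperateGrowth :=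
    (EuclideanSpace.proj j : PS N →L[ℝ] ℝ).hasTemperateGrowth
  convert (SchwartzMap.smulLeftCLM ℂ (fun x : PS N => x j) F).integrable (μ := μ) using 1
  ext x
  simp [SchwartzMap.smulLeftCLM_apply_apply hcoord, muj, Complex.real_smul]

variable [μ.IsAddHaarMeasure]

theorem integral_hatpdj_mul_phase_left (j : Fin N ⊕ Fin N) (F : 𝓢(PS N, ℂ)) (t : PS N) :
    ∫ s, hatpdj j F s * exp (I * symp s t) ∂μ
      = I * t j * ∫ s, F s * exp (I * symp s t) ∂μ := by
  simpa [hatpdj_apply, symp_hatVec_left] using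
    F.integral_fderiv_mul_cexp (μ := μ) (hatVec j) (sympCLM.flip t)

theorem integral_hatpdj_mul_phase_right (j : Fin N ⊕ Fin N) (F : 𝓢(PS N, ℂ)) (s : PS N) :
    ∫ t, hatpdj j F t * exp (I * symp s t) ∂μ
      = -(I * s j) * ∫ t, F t * exp (I * symp s t) ∂μ := by
  simpa [hatpdj_apply, symp_hatVec_right] using
    F.integral_fderiv_mul_cexp (μ := μ) (hatVec j) (sympCLM s)

end Schwartz

section Pairing

variable {N : ℕ} {μ : Measure (PS N)}

def twPairing (μ : Measure (PS N)) (a b : PS N → ℂ) : ℂ :=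
  ∫ s, ∫ t, a s * b t * exp (I * symp s t) ∂μ ∂μ

theorem twProd_eq_twPairing (a b : PS N → ℂ) (u : PS N) :
    twProd a b u = twPairing (mes N) (fun s => a (u + s)) (fun t => b (u + t)) := rfl

theorem twPairing_eq_integral_mul_left (a b : PS N → ℂ) :
    twPairing μ a b = ∫ s, a s * ∫ t, b t * exp (I * symp s t) ∂μ ∂μ := by
  unfold twPairing
  congr 1 with s
  rw [← integral_const_mul]
  congr 1 with t
  ring

theorem twPairing_smul_left (c : ℂ) (a b : PS N → ℂ) :
    twPairing μ (c • a) b = c * twPairing μ a b := by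
  simp only [twPairing_eq_integral_mul_left, Pi.smul_apply, smul_eq_mul, mul_assoc,
    integral_const_mul]

theorem twPairing_smul_right (c : ℂ) (a b : PS N → ℂ) :
    twPairing μ a (c • b) = c * twPairing μ a b := by
  unfold twPairing
  rw [← integral_const_mul]
  congr 1 with s
  rw [← integral_const_mul]
  congr 1 with t
  simp only [Pi.smul_apply, smul_eq_mul]
  ring

theorem integrable_prod_twPairing {a b : PS N → ℂ} (ha : Integrable a μ)
    (hb : Integrable b μ) :
    Integrable (fun p : PS N × PS N => a p.1 * b p.2 * exp (I * symp p.1 p.2)) (μ.prod μ) :=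
  (ha.mul_prod hb).mul_cexp_I_mul measurable_symp

variable [SFinite μ]

theorem twPairing_eq_integral_mul_right {a b : PS N → ℂ} (ha : Integrable a μ)
    (hb : Integrable b μ) :
    twPairing μ a b = ∫ t, b t * ∫ s, a s * exp (I * symp s t) ∂μ ∂μ := by
  rw [twPairing, integral_integral_swap (integrable_prod_twPairing ha hb)]
  congr 1 with t
  rw [← integral_const_mul]
  congr 1 with s
  ring

theorem twPairing_add_left {a a' b : PS N → ℂ} (ha : Integrable a μ) (ha' : Integrable a' μ)
    (hb : Integrable b μ) :
    twPairing μ (a + a') b = twPairing μ a b + twPairing μ a' b := by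
  simpa only [twPairing, Pi.add_apply, add_mul] using
    integral_integral_add (integrable_prod_twPairing ha hb) (integrable_prod_twPairing ha' hb)

theorem twPairing_add_right {a b b' : PS N → ℂ} (ha : Integrable a μ) (hb : Integrable b μ)
    (hb' : Integrable b' μ) :
    twPairing μ a (b + b') = twPairing μ a b + twPairing μ a b' := by
  simpa only [twPairing, Pi.add_apply, mul_add, add_mul] using
    integral_integral_add (integrable_prod_twPairing ha hb) (integrable_prod_twPairing ha hb')

end Pairing

section Coordinate

variable {N : ℕ} {μ : Measure (PS N)} [μ.IsAddHaarMeasure]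

theorem twPairing_muj_left (j : Fin N ⊕ Fin N) (a b : 𝓢(PS N, ℂ)) :
    twPairing μ (muj j a) b = I * twPairing μ a (hatpdj j b) := by
  simp only [twPairing_eq_integral_mul_left, integral_hatpdj_mul_phase_right, muj]
  rw [← integral_const_mul]
  congr 1 with s
  ring_nf
  rw [I_sq]
  ring

theorem twPairing_muj_right (j : Fin N ⊕ Fin N) (a b : 𝓢(PS N, ℂ)) :
    twPairing μ a (muj j b) = -I * twPairing μ (hatpdj j a) b := by
  rw [twPairing_eq_integral_mul_right a.integrable (integrable_muj j b),
    twPairing_eq_integral_mul_right (integrable_hatpdj j a) b.integrable]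
  simp only [integral_hatpdj_mul_phase_left, muj]
  rw [← integral_const_mul]
  congr 1 with t
  ring_nf
  rw [I_sq]
  ring

end Coordinate

instance inst_s2 (N : ℕ) : (mes N).IsAddHaarMeasure :=
  .smul _ (ENNReal.inv_ne_zero.2 ENNReal.ofReal_ne_top)
    (ENNReal.inv_ne_top.2 (ENNReal.ofReal_pos.2 (by positivity)).ne')

theorem twProd_coordinate_rules_general (N : ℕ)
    (f g : SchwartzMap (PS N) ℂ) (j : Fin N ⊕ Fin N) (u : PS N) :
    (u j : ℂ) * twProd (⇑f) (⇑g) u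
        = twProd (⇑f) (muj j (⇑g)) u + Complex.I * twProd (hatpdj j (⇑f)) (⇑g) u ∧
    (u j : ℂ) * twProd (⇑f) (⇑g) u
        = twProd (muj j (⇑f)) (⇑g) u - Complex.I * twProd (⇑f) (hatpdj j (⇑g)) u := by
  obtain ⟨a, ha⟩ : ∃ a : 𝓢(PS N, ℂ), ⇑a = fun s => f (u + s) :=
    ⟨_, f.coe_compSubConstCLM_neg u⟩
  obtain ⟨b, hb⟩ : ∃ b : 𝓢(PS N, ℂ), ⇑b = fun t => g (u + t) :=
    ⟨_, g.coe_compSubConstCLM_neg u⟩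
  simp only [twProd_eq_twPairing, muj_comp_add_left, ← hatpdj_comp_add_left, ← ha, ← hb]
  rw [twPairing_add_right a.integrable (b.integrable.smul _) (integrable_muj j b),
    twPairing_add_left (a.integrable.smul _) (integrable_muj j a) b.integrable,
    twPairing_smul_right, twPairing_smul_left, twPairing_muj_right, twPairing_muj_left]
  constructor <;> ring

theorem twProd_coordinate_rules (N : ℕ) (hN : 0 < N)
    (f g : SchwartzMap (PS N) ℂ) (j : Fin N ⊕ Fin N) (u : PS N) :
    (u j : ℂ) * twProd (⇑f) (⇑g) u
        = twProd (⇑f) (muj j (⇑g)) u + Complex.I * twProd (hatpdj j (⇑f)) (⇑g) u ∧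
    (u j : ℂ) * twProd (⇑f) (⇑g) u
        = twProd (muj j (⇑f)) (⇑g) u - Complex.I * twProd (⇑f) (hatpdj j (⇑g)) u :=
  twProd_coordinate_rules_general N f g j u
end
end

section
/- For all complex-valued Schwartz functions f and g on ℝ^{2N}, one has pointwise on ℝ^{2N}: f × g = (Ff) ♮ g = f ♮ (F̃g), and f ♮ g = (Ff) × g = f × (F̃g). -/
open MeasureTheory SchwartzMap Complex

noncomputable section

def twConv {N : ℕ} (f g : PS N → ℂ) : PS N → ℂ := fun u =>
  ∫ t, f (u - t) * g t * Complex.exp (-Complex.I * (symp u t : ℂ)) ∂(mes N)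

/-- The symplectic Fourier transform `F`. -/
def sympF {N : ℕ} (f : PS N → ℂ) : PS N → ℂ := fun u =>
  ∫ t, f t * Complex.exp (-Complex.I * (symp t u : ℂ)) ∂(mes N)

/-- The symplectic Fourier transform `F̃`. -/
def sympFt {N : ℕ} (f : PS N → ℂ) : PS N → ℂ := fun u =>
  ∫ t, f t * Complex.exp (Complex.I * (symp t u : ℂ)) ∂(mes N)

/-! The phase of the twisted product, after translating both variables by `u`, is
`σ(w - u, x - u) = σ(w, x) - σ(w, u) - σ(u, x)`. Integrating out `x` first produces `F̃ g`, and
(by Fubini) integrating out `w` first produces `F f`: these are the two identities for `f × g`.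
Since `F ∘ F = id` and `F̃ ∘ F̃ = id` on Schwartz functions, applying them to `F f` and to `F̃ g`
gives the two identities for `f ♮ g`. Involutivity of `F` is Fourier inversion: `F f` is the
Euclidean Fourier transform of `f` read at `(2π)⁻¹ J u`, with `J` the standard complex structure
(`σ(u, v) = ⟪u, J v⟫`), and the normalisation `(2π)^{-N}` of the measure cancels the Jacobian
`(2π)^{2N}` of this dilation. -/

open FourierTransform RealInnerProductSpace

section Dilation

variable {V E : Type*} [NormedAddCommGroup V] [InnerProductSpace ℝ V] [FiniteDimensional ℝ V]
  [MeasurableSpace V] [BorelSpace V] [NormedAddCommGroup E]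

theorem integral_comp_smul_linearIsometryEquiv [NormedSpace ℝ E] (A : V ≃ₗᵢ[ℝ] V) (h : V → E)
    (a : ℝ) :
    ∫ v, h (a • A v) = |(a ^ Module.finrank ℝ V)⁻¹| • ∫ v, h v := by
  rw [A.measurePreserving.integral_comp A.toHomeomorph.measurableEmbedding (fun v => h (a • v)),
    Measure.integral_comp_smul]

theorem MeasureTheory.Integrable.comp_smul_linearIsometryEquiv {h : V → E} (hh : Integrable h)
    (A : V ≃ₗᵢ[ℝ] V) {a : ℝ} (ha : a ≠ 0) : Integrable (fun v => h (a • A v)) :=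
  (A.measurePreserving.integrable_comp_emb A.toHomeomorph.measurableEmbedding).2 (hh.comp_smul ha)

end Dilation

section Symplectic

variable {N : ℕ}

lemma symp_sub_left (u v w : PS N) : symp (u - v) w = symp u w - symp v w := by
  simp only [symp, PiLp.sub_apply, ← Finset.sum_sub_distrib]
  exact Finset.sum_congr rfl fun i _ => by ring

lemma symp_sub_right (u v w : PS N) : symp u (v - w) = symp u v - symp u w := by
  simp only [symp, PiLp.sub_apply, ← Finset.sum_sub_distrib]
  exact Finset.sum_congr rfl fun i _ => by ring

lemma symp_swap (u v : PS N) : symp v u = -symp u v := by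
  simp only [symp, ← Finset.sum_neg_distrib]
  exact Finset.sum_congr rfl fun i _ => by ring

lemma symp_self (u : PS N) : symp u u = 0 := by
  simpa [CharZero.eq_neg_self_iff] using symp_swap u u

lemma symp_neg_left (u v : PS N) : symp (-u) v = -symp u v := by
  simp only [symp, PiLp.neg_apply, ← Finset.sum_neg_distrib]
  exact Finset.sum_congr rfl fun i _ => by ring

lemma continuous_symp : Continuous fun p : PS N × PS N => symp p.1 p.2 := by
  unfold symp; fun_prop

def sympJ (N : ℕ) : PS N ≃ₗᵢ[ℝ] PS N where
  toFun u := WithLp.toLp 2 (Sum.elim (fun i => u (Sum.inr i)) (fun i => -u (Sum.inl i)))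
  invFun u := WithLp.toLp 2 (Sum.elim (fun i => -u (Sum.inr i)) (fun i => u (Sum.inl i)))
  map_add' u v := by ext (i | i) <;> simp [add_comm]
  map_smul' c u := by ext (i | i) <;> simp
  left_inv u := by ext (i | i) <;> simp
  right_inv u := by ext (i | i) <;> simp
  norm_map' u := by
    simp only [EuclideanSpace.norm_eq, Fintype.sum_sum_type]
    simp [add_comm]

lemma symp_eq_inner (u v : PS N) : symp u v = ⟪u, sympJ N v⟫ := by
  simp [symp, sympJ, PiLp.inner_apply, Fintype.sum_sum_type, Finset.sum_add_distrib,
    Finset.sum_neg_distrib, mul_comm, sub_eq_add_neg]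

end Symplectic

section Measure

variable {N : ℕ} {E : Type*} [NormedAddCommGroup E]

instance : SFinite (mes N) := by unfold mes; infer_instance
instance : (mes N).IsAddLeftInvariant := by unfold mes; infer_instance
instance : (mes N).IsNegInvariant := by
  constructor
  rw [mes, Measure.neg_def, Measure.map_smul, Measure.map_neg_eq_self]

lemma integral_mes [NormedSpace ℝ E] (h : PS N → E) :
    ∫ x, h x ∂(mes N) = ((2 * Real.pi) ^ N)⁻¹ • ∫ x, h x := by
  rw [mes, integral_smul_measure, ENNReal.toReal_inv, ENNReal.toReal_ofReal (by positivity)]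

lemma MeasureTheory.Integrable.mes {h : PS N → E} (hh : Integrable h) : Integrable h (mes N) :=
  hh.smul_measure (by simp [Real.pi_pos])

end Measure

section Fourier

variable {N : ℕ}

lemma sympF_eq_fourier (h : PS N → ℂ) (u : PS N) :
    sympF h u = ((2 * Real.pi) ^ N)⁻¹ • 𝓕 h ((2 * Real.pi)⁻¹ • sympJ N u) := by
  rw [sympF, integral_mes, Real.fourier_eq']
  congr 2 with t
  rw [symp_eq_inner, inner_smul_right, smul_eq_mul, mul_comm]
  congr 2
  field_simp
  push_cast
  ring

lemma sympFt_eq_sympF_neg (h : PS N → ℂ) (u : PS N) : sympFt h u = sympF h (-u) := by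
  simp [sympFt, sympF, symp_eq_inner]

lemma integrable_sympF {h : PS N → ℂ} (hh : Integrable (𝓕 h)) : Integrable (sympF h) (mes N) := by
  simp_rw [funext (sympF_eq_fourier h)]
  exact ((hh.comp_smul_linearIsometryEquiv _ (inv_ne_zero Real.two_pi_pos.ne')).smul
    (((2 * Real.pi) ^ N)⁻¹ : ℝ)).mes

lemma sympF_sympF {h : PS N → ℂ} (hc : Continuous h) (hi : Integrable h) (hF : Integrable (𝓕 h)) :
    sympF (sympF h) = h := by
  ext u
  set K : PS N → ℂ := fun v => Complex.exp (↑(2 * Real.pi * ⟪v, u⟫) * Complex.I) • 𝓕 h v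
  have hK : ∀ t, sympF h t * Complex.exp (-Complex.I * symp t u) =
      ((2 * Real.pi) ^ N)⁻¹ • K ((2 * Real.pi)⁻¹ • sympJ N t) := by
    intro t
    have hphase : 2 * Real.pi * ⟪(2 * Real.pi)⁻¹ • sympJ N t, u⟫ = ⟪sympJ N t, u⟫ := by
      rw [real_inner_smul_left, mul_inv_cancel_left₀ Real.two_pi_pos.ne']
    rw [sympF_eq_fourier, symp_swap, symp_eq_inner, real_inner_comm]
    simp only [K, hphase, smul_eq_mul, Complex.real_smul]
    push_cast
    ring_nf
  calc sympF (sympF h) u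
      = ((2 * Real.pi) ^ N)⁻¹ • ((2 * Real.pi) ^ N)⁻¹ •
          ∫ t, K ((2 * Real.pi)⁻¹ • sympJ N t) := by
        rw [sympF, integral_mes]; simp_rw [hK, integral_smul]
    _ = 𝓕⁻ (𝓕 h) u := by
        have hscalar : ((2 * Real.pi) ^ N)⁻¹ * ((2 * Real.pi) ^ N)⁻¹ *
            |((2 * Real.pi)⁻¹ ^ Module.finrank ℝ (PS N))⁻¹| = 1 := by
          rw [finrank_euclideanSpace, Fintype.card_sum, Fintype.card_fin, inv_pow, inv_inv,
            abs_of_pos (by positivity), pow_add]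
          field_simp
        rw [integral_comp_smul_linearIsometryEquiv, ← Real.fourierInv_eq', smul_smul, smul_smul,
          hscalar, one_smul]
    _ = h u := by rw [hc.fourierInv_fourier_eq hi hF]

lemma sympFt_sympFt (h : PS N → ℂ) : sympFt (sympFt h) = sympF (sympF h) := by
  ext u
  rw [sympFt, ← integral_neg_eq_self]
  simp [sympFt_eq_sympF_neg, sympF, symp_neg_left]

end Fourier

section Twisted

variable {N : ℕ}

lemma twProd_eq_integral_integral (F G : PS N → ℂ) (u : PS N) :
    twProd F G u = ∫ w, ∫ x, F w * G x *
      Complex.exp (Complex.I * symp (w - u) (x - u)) ∂(mes N) ∂(mes N) := by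
  rw [twProd]
  conv_rhs => rw [← integral_add_left_eq_self _ u]
  congr 1 with s
  conv_rhs => rw [← integral_add_left_eq_self _ u]
  simp only [add_sub_cancel_left]

lemma twProd_eq_twConv_sympFt (F G : PS N → ℂ) (u : PS N) :
    twProd F G u = twConv F (sympFt G) u := by
  rw [twProd_eq_integral_integral, ← integral_sub_left_eq_self _ (mes N) u, twConv]
  congr 1 with t
  rw [sympFt, ← integral_const_mul, ← integral_mul_const]
  congr 1 with x
  have hphase : Complex.I * symp (u - t - u) (x - u) =
      Complex.I * symp x t + -Complex.I * symp u t := by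
    rw [sub_sub_cancel_left, symp_neg_left, symp_sub_right, symp_swap t x, symp_swap t u]
    push_cast
    ring
  rw [hphase, Complex.exp_add]
  ring

lemma integrable_twProd_integrand {F G : PS N → ℂ} (hF : Integrable F (mes N))
    (hG : Integrable G (mes N)) (u : PS N) :
    Integrable (fun p : PS N × PS N => F p.1 * G p.2 *
      Complex.exp (Complex.I * symp (p.1 - u) (p.2 - u))) ((mes N).prod (mes N)) := by
  refine (hF.mul_prod hG).mul_bdd (c := 1) ?_ (Filter.Eventually.of_forall fun p => ?_)
  · exact (continuous_exp.comp (continuous_const.mul (continuous_ofReal.comp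
      (continuous_symp.comp ((continuous_fst.sub continuous_const).prodMk
        (continuous_snd.sub continuous_const)))))).aestronglyMeasurable
  · simp [Complex.norm_exp]

lemma twProd_eq_twConv_sympF {F G : PS N → ℂ} (hF : Integrable F (mes N))
    (hG : Integrable G (mes N)) (u : PS N) :
    twProd F G u = twConv (sympF F) G u := by
  rw [twProd_eq_integral_integral, integral_integral_swap (integrable_twProd_integrand hF hG u),
    twConv]
  congr 1 with x
  rw [sympF, ← integral_mul_const, ← integral_mul_const]
  congr 1 with w
  have hphase : Complex.I * symp (w - u) (x - u) =
      -Complex.I * symp w (u - x) + -Complex.I * symp u x := by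
    rw [symp_sub_left, symp_sub_right, symp_sub_right, symp_sub_right, symp_self]
    push_cast
    ring
  rw [hphase, Complex.exp_add]
  ring

end Twisted

theorem twProd_twConv_fourier_switch_general (N : ℕ)
    (f g : SchwartzMap (PS N) ℂ) (u : PS N) :
    twProd (⇑f) (⇑g) u = twConv (sympF (⇑f)) (⇑g) u ∧
    twProd (⇑f) (⇑g) u = twConv (⇑f) (sympFt (⇑g)) u ∧
    twConv (⇑f) (⇑g) u = twProd (sympF (⇑f)) (⇑g) u ∧
    twConv (⇑f) (⇑g) u = twProd (⇑f) (sympFt (⇑g)) u := by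
  have hFf : Integrable (𝓕 ⇑f) := (𝓕 f).integrable
  have hFg : Integrable (𝓕 ⇑g) := (𝓕 g).integrable
  refine ⟨twProd_eq_twConv_sympF f.integrable.mes g.integrable.mes u,
    twProd_eq_twConv_sympFt f g u, ?_, ?_⟩
  · rw [twProd_eq_twConv_sympF (integrable_sympF hFf) g.integrable.mes,
      sympF_sympF f.continuous f.integrable hFf]
  · rw [twProd_eq_twConv_sympFt, sympFt_sympFt, sympF_sympF g.continuous g.integrable hFg]

theorem twProd_twConv_fourier_switch (N : ℕ) (hN : 0 < N)
    (f g : SchwartzMap (PS N) ℂ) (u : PS N) :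
    twProd (⇑f) (⇑g) u = twConv (sympF (⇑f)) (⇑g) u ∧
    twProd (⇑f) (⇑g) u = twConv (⇑f) (sympFt (⇑g)) u ∧
    twConv (⇑f) (⇑g) u = twProd (sympF (⇑f)) (⇑g) u ∧
    twConv (⇑f) (⇑g) u = twProd (⇑f) (sympFt (⇑g)) u :=
  twProd_twConv_fourier_switch_general N f g u
end
end

section
/- For all complex-valued Schwartz functions f, g, h on ℝ^{2N}: ∫ (f × g)(u) h(u) du = ∫ f(u) (g × h)(u) du = ∫ g(u) (h × f)(u) du. -/
open MeasureTheory SchwartzMap Complex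

noncomputable section

/-! After translating both integration variables by `u`, `(f × g)(u)` becomes
`∫∫ f(a) g(b) e^{i(σ(u,a) + σ(a,b) + σ(b,u))} da db`. Hence each of the three pairings is the
triple integral of `f ⊗ g ⊗ h` (in some cyclic order) against the phase
`e^{i(σ(a,b) + σ(b,c) + σ(c,a))}`, which is invariant under cyclic permutations of `(a, b, c)`;
so is the product measure, and Fubini finishes the proof. -/

section TripleProduct

variable {α E : Type*} [MeasurableSpace α] [NormedAddCommGroup E] [NormedSpace ℝ E]
  (μ : Measure α) [SFinite μ]

theorem integral_prod_prod_rotate (F : α → α → α → E) :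
    ∫ p, F p.2.1 p.2.2 p.1 ∂μ.prod (μ.prod μ) =
      ∫ p, F p.1 p.2.1 p.2.2 ∂μ.prod (μ.prod μ) :=
  ((measurePreserving_prodAssoc μ μ μ).comp Measure.measurePreserving_swap).integral_comp
    (MeasurableEquiv.prodComm.trans MeasurableEquiv.prodAssoc).measurableEmbedding
    fun p => F p.1 p.2.1 p.2.2

variable {μ} in
theorem integral_prod_prod {F : α × α × α → E} (hF : Integrable F (μ.prod (μ.prod μ))) :
    ∫ p, F p ∂μ.prod (μ.prod μ) = ∫ x, ∫ y, ∫ z, F (x, y, z) ∂μ ∂μ ∂μ := by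
  rw [integral_prod _ hF]
  refine integral_congr_ae ?_
  filter_upwards [hF.prod_right_ae] with x hx
  rw [integral_prod _ hx]

end TripleProduct

namespace TwistedProduct

variable {N : ℕ}

theorem mes_smul_ne_top (N : ℕ) : (ENNReal.ofReal ((2 * Real.pi) ^ N))⁻¹ ≠ ⊤ :=
  ENNReal.inv_ne_top.mpr (ENNReal.ofReal_pos.mpr (by positivity)).ne'

instance (N : ℕ) : SFinite (mes N) := by
  rw [mes]; infer_instance

instance (N : ℕ) : (mes N).IsAddLeftInvariant := by
  rw [mes]; infer_instance

theorem _root_.SchwartzMap.integrable_mes (f : SchwartzMap (PS N) ℂ) : Integrable f (mes N) :=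
  f.integrable.smul_measure (mes_smul_ne_top N)

theorem continuous_symp : Continuous fun p : PS N × PS N => symp p.1 p.2 := by
  unfold symp; fun_prop

theorem symp_sub_sub (u a b : PS N) : symp (a - u) (b - u) = symp u a + symp a b + symp b u := by
  simp only [symp, PiLp.sub_apply, ← Finset.sum_add_distrib]
  exact Finset.sum_congr rfl fun i _ => by ring

def cyclicPhase (a b c : PS N) : ℂ :=
  exp (I * ↑(symp a b + symp b c + symp c a))

theorem cyclicPhase_rotate (a b c : PS N) : cyclicPhase b c a = cyclicPhase a b c := by
  unfold cyclicPhase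
  congr 3
  ring

theorem norm_cyclicPhase (a b c : PS N) : ‖cyclicPhase a b c‖ = 1 :=
  norm_exp_I_mul_ofReal _

theorem continuous_cyclicPhase :
    Continuous fun p : PS N × PS N × PS N => cyclicPhase p.1 p.2.1 p.2.2 := by
  unfold cyclicPhase
  have hσ := continuous_symp (N := N)
  fun_prop

theorem twProd_eq_integral_cyclicPhase (f g : PS N → ℂ) (u : PS N) :
    twProd f g u = ∫ a, ∫ b, f a * g b * cyclicPhase u a b ∂mes N ∂mes N := by
  rw [twProd,
    ← integral_add_left_eq_self (fun a => ∫ b, f a * g b * cyclicPhase u a b ∂mes N) u]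
  refine integral_congr_ae (.of_forall fun s => ?_)
  dsimp only
  rw [← integral_add_left_eq_self (fun b => f (u + s) * g b * cyclicPhase u (u + s) b) u]
  refine integral_congr_ae (.of_forall fun t => ?_)
  simp only [cyclicPhase, ← symp_sub_sub, add_sub_cancel_left]

def cyclicForm (μ : Measure (PS N)) (f g h : PS N → ℂ) : ℂ :=
  ∫ p, f p.1 * g p.2.1 * h p.2.2 * cyclicPhase p.1 p.2.1 p.2.2 ∂μ.prod (μ.prod μ)

theorem cyclicForm_rotate (μ : Measure (PS N)) [SFinite μ] (f g h : PS N → ℂ) :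
    cyclicForm μ g h f = cyclicForm μ f g h := by
  refine (integral_prod_prod_rotate μ fun a b c =>
    g a * h b * f c * cyclicPhase a b c).symm.trans ?_
  refine integral_congr_ae (.of_forall fun p => ?_)
  dsimp only
  rw [cyclicPhase_rotate]
  ring

theorem integrable_cyclicForm_integrand {μ : Measure (PS N)} [SFinite μ] {f g h : PS N → ℂ}
    (hf : Integrable f μ) (hg : Integrable g μ) (hh : Integrable h μ) :
    Integrable (fun p => f p.1 * g p.2.1 * h p.2.2 * cyclicPhase p.1 p.2.1 p.2.2)
      (μ.prod (μ.prod μ)) := by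
  simpa only [mul_assoc] using (hf.mul_prod (hg.mul_prod hh)).mul_bdd
    continuous_cyclicPhase.aestronglyMeasurable (.of_forall fun p => (norm_cyclicPhase _ _ _).le)

theorem integral_mul_twProd {f g h : PS N → ℂ} (hf : Integrable f (mes N))
    (hg : Integrable g (mes N)) (hh : Integrable h (mes N)) :
    ∫ u, f u * twProd g h u ∂mes N = cyclicForm (mes N) f g h := by
  rw [cyclicForm, integral_prod_prod (integrable_cyclicForm_integrand hf hg hh)]
  refine integral_congr_ae (.of_forall fun u => ?_)
  dsimp only
  rw [twProd_eq_integral_cyclicPhase, ← integral_const_mul]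
  refine integral_congr_ae (.of_forall fun a => ?_)
  dsimp only
  rw [← integral_const_mul]
  refine integral_congr_ae (.of_forall fun b => ?_)
  ring

end TwistedProduct

open TwistedProduct in
theorem twProd_cyclic_pairing_general (N : ℕ)
    (f g h : SchwartzMap (PS N) ℂ) :
    (∫ u, twProd (⇑f) (⇑g) u * h u ∂(mes N)) = (∫ u, f u * twProd (⇑g) (⇑h) u ∂(mes N)) ∧
    (∫ u, twProd (⇑f) (⇑g) u * h u ∂(mes N)) = ∫ u, g u * twProd (⇑h) (⇑f) u ∂(mes N) := by
  have hf := f.integrable_mes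
  have hg := g.integrable_mes
  have hh := h.integrable_mes
  have hfgh : ∫ u, twProd f g u * h u ∂mes N = cyclicForm (mes N) h f g := by
    simp only [mul_comm _ (h _)]
    exact integral_mul_twProd hh hf hg
  rw [hfgh, integral_mul_twProd hf hg hh, integral_mul_twProd hg hh hf]
  exact ⟨(cyclicForm_rotate _ g h f).trans (cyclicForm_rotate _ f g h),
    cyclicForm_rotate _ g h f⟩

theorem twProd_cyclic_pairing (N : ℕ) (hN : 0 < N)
    (f g h : SchwartzMap (PS N) ℂ) :
    (∫ u, twProd (⇑f) (⇑g) u * h u ∂(mes N)) = (∫ u, f u * twProd (⇑g) (⇑h) u ∂(mes N)) ∧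
    (∫ u, twProd (⇑f) (⇑g) u * h u ∂(mes N)) = ∫ u, g u * twProd (⇑h) (⇑f) u ∂(mes N) :=
  twProd_cyclic_pairing_general N f g h
end
end
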